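/- arXiv:1212.2619 — 5 statements merged into one kernel-verified Lean document; each statement's English description precedes it below -/
import Mathlib

section
/- Let k be a field, A a finite-dimensional associative unital k-algebra with Jacobson radical J, and M an A-bimodule that is finite-dimensional over k and projective both as a left A-module and as a right A-module. Then the following conditions are equivalent: (1) M/JM ≅ A/J as right A-modules and M/MJ ≅ A/J as left A-modules; (2) M/JM ≅ A/J as left A-modules and M/MJ ≅ A/J as right A-modules; (3) M ≅ A as right A-modules and M ≅ A as left A-modules; (4) there exists a k-algebra automorphism φ of A such that M ≅ A_φ as A-bimodules. -/
/-!
Everything is reduced modulo the radical `J`, which on `A` and on `Aᵐᵒᵖ` is the same set since it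
is the set of `a` with `1 + x a y` invertible for all `x, y`. If `P, Q` are finitely generated
projective and `P/JP ≅ Q/JQ`, lift this to `g : P → Q`; `g` is onto by Nakayama, splits by
projectivity of `Q`, and its kernel lies in `JP`, so the splitting is onto by Nakayama again.
This gives (2) ↔ (3). Given `e : M ≅ A` on the left, the right action of `b` becomes right
multiplication by some `φ b`; `φ` is an algebra map, injective because `M ≅ A` on the right is
faithful, hence bijective by dimension: (3) → (4). Each of (1) and (4) forces `JM = MJ` (in (1)
because each quotient is killed by `J` from the other side, in (4) because `φ J = J`), and then
(1) and (2) say the same thing.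
-/

open MulOpposite

namespace Ring

variable {R : Type*} [Ring R]

theorem exists_mul_one_add_eq_one_of_mem_jacobson {a : R} (ha : a ∈ jacobson R) :
    ∃ z, z * (1 + a) = 1 := by
  rw [← Ideal.jacobson_bot, Ideal.mem_jacobson_iff] at ha
  obtain ⟨z, hz⟩ := ha 1
  refine ⟨z, ?_⟩
  rwa [Ideal.mem_bot, mul_one, sub_eq_zero, add_comm, ← mul_one_add] at hz

theorem isUnit_one_add_of_mem_jacobson {a : R} (ha : a ∈ jacobson R) : IsUnit (1 + a) := by
  obtain ⟨z, hz⟩ := exists_mul_one_add_eq_one_of_mem_jacobson ha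
  -- `z = 1 - z * a` is again `1 + (radical element)`, so it is left invertible as well
  have hz' : z = 1 + -(z * a) := by rw [← hz]; noncomm_ring
  obtain ⟨w, hw⟩ :=
    exists_mul_one_add_eq_one_of_mem_jacobson (neg_mem ((jacobson R).mul_mem_left z ha))
  rw [← hz'] at hw
  exact ⟨⟨1 + a, z, left_inv_eq_right_inv hw hz ▸ hw, hz⟩, rfl⟩

theorem mem_jacobson_iff_forall_isUnit {a : R} :
    a ∈ jacobson R ↔ ∀ x y : R, IsUnit (1 + x * a * y) := by
  refine ⟨fun ha x y => isUnit_one_add_of_mem_jacobson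
    ((jacobson R).mul_mem_right y ((jacobson R).mul_mem_left x ha)), fun h => ?_⟩
  rw [← Ideal.jacobson_bot, Ideal.mem_jacobson_iff]
  intro y
  obtain ⟨u, hu⟩ := h y 1
  refine ⟨↑u⁻¹, ?_⟩
  rw [mul_one] at hu
  rw [Ideal.mem_bot]
  calc (↑u⁻¹ : R) * y * a + ↑u⁻¹ - 1 = ↑u⁻¹ * (1 + y * a) - 1 := by noncomm_ring
    _ = 0 := by rw [← hu, u.inv_mul, sub_self]

theorem op_mem_jacobson_iff {a : R} : op a ∈ jacobson Rᵐᵒᵖ ↔ a ∈ jacobson R := by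
  simp only [mem_jacobson_iff_forall_isUnit, op_surjective.forall, ← op_mul, ← op_one, ← op_add,
    isUnit_op, mul_assoc]
  exact forall_comm

theorem map_mem_jacobson_iff {S : Type*} [Ring S] (φ : R ≃+* S) {a : R} :
    φ a ∈ jacobson S ↔ a ∈ jacobson R := by
  simp only [mem_jacobson_iff_forall_isUnit, φ.surjective.forall, ← map_mul, ← map_one φ,
    ← map_add, isUnit_map_iff]

end Ring

section ProjectiveCover

variable {R M N : Type*} [Ring R] [AddCommGroup M] [Module R M] [AddCommGroup N] [Module R N]
  {I : Ideal R}

theorem Submodule.eq_top_of_sup_smul_top_eq_top [Module.Finite R M] (hI : I ≤ Ring.jacobson R)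
    {P : Submodule R M} (h : P ⊔ I • ⊤ = ⊤) : P = ⊤ := by
  have hQ : (⊤ : Submodule R (M ⧸ P)) ≤ Ring.jacobson R • ⊤ :=
    calc ⊤ = map P.mkQ (P ⊔ I • ⊤) := by rw [h, map_top, range_mkQ]
      _ = I • ⊤ := by rw [map_sup, map_smul'', mkQ_map_self, bot_sup_eq, map_top, range_mkQ]
      _ ≤ Ring.jacobson R • ⊤ := smul_mono_left hI
  rw [← Quotient.subsingleton_iff, ← subsingleton_iff R, ← subsingleton_iff_bot_eq_top]
  exact (FG.eq_bot_of_le_jacobson_smul Module.Finite.fg_top hQ).symm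

theorem LinearMap.surjective_of_surjective_mkQ_comp [Module.Finite R N] (hI : I ≤ Ring.jacobson R)
    (f : M →ₗ[R] N) (hf : Function.Surjective ((I • ⊤ : Submodule R N).mkQ ∘ₗ f)) :
    Function.Surjective f := by
  rw [← range_eq_top]
  refine Submodule.eq_top_of_sup_smul_top_eq_top hI (eq_top_iff.mpr fun y _ => ?_)
  obtain ⟨x, hx⟩ := hf (Submodule.Quotient.mk y)
  have hyx : y - f x ∈ I • ⊤ := (Submodule.Quotient.eq _).mp hx.symm
  exact Submodule.mem_sup.mpr ⟨f x, mem_range_self f x, y - f x, hyx, add_sub_cancel _ _⟩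

theorem Module.Projective.nonempty_linearEquiv_of_quotient [Module.Finite R M] [Module.Finite R N]
    [Module.Projective R M] [Module.Projective R N] (hI : I ≤ Ring.jacobson R)
    (e : (M ⧸ (I • ⊤ : Submodule R M)) ≃ₗ[R] N ⧸ (I • ⊤ : Submodule R N)) :
    Nonempty (M ≃ₗ[R] N) := by
  obtain ⟨g, hg⟩ := Module.projective_lifting_property (I • ⊤ : Submodule R N).mkQ
    (e.toLinearMap ∘ₗ (I • ⊤ : Submodule R M).mkQ) (Submodule.mkQ_surjective _)
  have hg_surj : Function.Surjective g := g.surjective_of_surjective_mkQ_comp hI <| by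
    rw [hg]; exact e.surjective.comp (Submodule.mkQ_surjective _)
  obtain ⟨h, hh⟩ := Module.projective_lifting_property g LinearMap.id hg_surj
  have hgh : ∀ y, g (h y) = y := LinearMap.congr_fun hh
  have hker : ∀ x, g x = 0 → x ∈ (I • ⊤ : Submodule R M) := by
    intro x hx
    have := LinearMap.congr_fun hg x
    rw [LinearMap.comp_apply, hx, map_zero, eq_comm] at this
    simpa using this
  have hh_surj : Function.Surjective h := h.surjective_of_surjective_mkQ_comp hI <| by
    intro q
    obtain ⟨x, rfl⟩ := Submodule.mkQ_surjective _ q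
    refine ⟨g x, (Submodule.Quotient.eq _).mpr (hker _ ?_)⟩
    rw [map_sub, hgh, sub_self]
  exact ⟨(LinearEquiv.ofBijective h ⟨Function.LeftInverse.injective hgh, hh_surj⟩).symm⟩

theorem Module.Projective.nonempty_linearEquiv_iff_quotient [Module.Finite R M]
    [Module.Finite R N] [Module.Projective R M] [Module.Projective R N] (hI : I ≤ Ring.jacobson R) :
    Nonempty (M ≃ₗ[R] N) ↔
      Nonempty ((M ⧸ (I • ⊤ : Submodule R M)) ≃ₗ[R] N ⧸ (I • ⊤ : Submodule R N)) :=
  ⟨fun ⟨e⟩ => ⟨Submodule.Quotient.equiv _ _ e <| by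
      rw [Submodule.map_smul'', Submodule.map_top, LinearEquiv.range]⟩,
    fun ⟨e⟩ => nonempty_linearEquiv_of_quotient hI e⟩

end ProjectiveCover

namespace Submodule

theorem ideal_smul_top_eq_span {R M : Type*} [Semiring R] [AddCommMonoid M] [Module R M]
    (I : Ideal R) : I • (⊤ : Submodule R M) = span R {x | ∃ a ∈ I, ∃ m : M, x = a • m} :=
  le_antisymm (smul_le.mpr fun a ha m _ => subset_span ⟨a, ha, m, rfl⟩)
    (span_le.mpr fun _ ⟨_, ha, _, hx⟩ => hx ▸ smul_mem_smul ha mem_top)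

theorem span_subset_span_of_smul_mem {R S M : Type*} [Semiring R] [Semiring S] [AddCommMonoid M]
    [Module R M] [Module S M] [SMulCommClass R S M] {T : Set M}
    (hT : ∀ r : R, ∀ t ∈ T, r • t ∈ T) : (span R T : Set M) ⊆ span S T := by
  intro x hx
  induction hx using span_induction with
  | mem x hx => exact subset_span hx
  | zero => exact zero_mem _
  | add x y _ _ hx hy => exact add_mem hx hy
  | smul r x _ hx =>
    have : map (DistribSMul.toLinearMap S M r) (span S T) ≤ span S T := by
      rw [map_span, span_le]
      rintro _ ⟨t, ht, rfl⟩
      exact subset_span (hT r t ht)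
    exact this (mem_map_of_mem hx)

theorem coe_span_eq_coe_span_of_smul_mem {R S M : Type*} [Semiring R] [Semiring S]
    [AddCommMonoid M] [Module R M] [Module S M] [SMulCommClass R S M] {T : Set M}
    (hR : ∀ r : R, ∀ t ∈ T, r • t ∈ T) (hS : ∀ s : S, ∀ t ∈ T, s • t ∈ T) :
    (span R T : Set M) = span S T :=
  have := SMulCommClass.symm R S M
  (span_subset_span_of_smul_mem hR).antisymm (span_subset_span_of_smul_mem hS)

theorem smul_top_le_of_quotient_equiv {R M P : Type*} [Ring R] [AddCommGroup M] [Module R M]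
    [AddCommGroup P] [Module R P] {N : Submodule R M} {N' : Submodule R P}
    (e : (M ⧸ N) ≃ₗ[R] P ⧸ N') {I : Ideal R} (h : I • (⊤ : Submodule R P) ≤ N') :
    I • (⊤ : Submodule R M) ≤ N := by
  refine smul_le.mpr fun r hr m _ => ?_
  rw [← Quotient.mk_eq_zero, Quotient.mk_smul, ← e.map_eq_zero_iff, map_smul]
  obtain ⟨p, hp⟩ := Quotient.mk_surjective N' (e (Quotient.mk m))
  rw [← hp, ← Quotient.mk_smul, Quotient.mk_eq_zero]
  exact h (smul_mem_smul hr mem_top)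

end Submodule

section Bimodule

open Submodule

variable {A M : Type*} [Ring A] [AddCommGroup M] [Module Aᵐᵒᵖ M]

theorem coe_span_smul_eq [Module A M] [SMulCommClass A Aᵐᵒᵖ M] (I : Ideal A) :
    (span A {x : M | ∃ a ∈ I, ∃ m, x = a • m} : Set M) =
      span Aᵐᵒᵖ {x : M | ∃ a ∈ I, ∃ m, x = a • m} :=
  coe_span_eq_coe_span_of_smul_mem
    (fun b _ ⟨a, ha, m, hx⟩ => ⟨b * a, I.mul_mem_left b ha, m, by rw [hx, mul_smul]⟩)
    (fun c _ ⟨a, ha, m, hx⟩ => ⟨a, ha, c • m, by rw [hx, smul_comm a c m]⟩)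

theorem coe_span_op_smul_eq [Module A M] [SMulCommClass A Aᵐᵒᵖ M] (I : Ideal A) [I.IsTwoSided] :
    (span A {x : M | ∃ a ∈ I, ∃ m, x = op a • m} : Set M) =
      span Aᵐᵒᵖ {x : M | ∃ a ∈ I, ∃ m, x = op a • m} :=
  coe_span_eq_coe_span_of_smul_mem
    (fun b _ ⟨a, ha, m, hx⟩ => ⟨a, ha, b • m, by rw [hx, smul_comm]⟩)
    (fun c _ ⟨a, ha, m, hx⟩ => ⟨a * unop c, I.mul_mem_right _ ha, m, by
      rw [hx, op_mul, op_unop, mul_smul]⟩)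

theorem span_op_smul_eq_jacobson_smul_top :
    span Aᵐᵒᵖ {x : M | ∃ a ∈ Ring.jacobson A, ∃ m, x = op a • m} = Ring.jacobson Aᵐᵒᵖ • ⊤ := by
  simp only [ideal_smul_top_eq_span, op_surjective.exists, Ring.op_mem_jacobson_iff]

theorem Ideal.coe_eq_setOf_op_smul (I : Ideal A) [I.IsTwoSided] :
    (I : Set A) = {x | ∃ a ∈ I, ∃ y : A, x = op a • y} :=
  Set.ext fun x => ⟨fun hx => ⟨x, hx, 1, (one_mul x).symm⟩,
    fun ⟨_, ha, y, hx⟩ => hx ▸ I.mul_mem_left y ha⟩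

theorem span_smul_jacobson_eq_span_op_smul [Module A M] (φ : A ≃+* A) (e : M ≃ₗ[A] A)
    (he : ∀ (b : A) (m : M), e (op b • m) = e m * φ b) :
    span A {x : M | ∃ a ∈ Ring.jacobson A, ∃ m, x = a • m} =
      span A {x : M | ∃ a ∈ Ring.jacobson A, ∃ m, x = op a • m} := by
  apply le_antisymm <;> rw [span_le] <;> rintro _ ⟨a, ha, m, rfl⟩ <;> apply subset_span
  · refine ⟨φ.symm (a * e m), (Ring.map_mem_jacobson_iff φ).mp ?_, e.symm 1, e.injective ?_⟩
    · simpa using (Ring.jacobson A).mul_mem_right (e m) ha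
    · rw [he, map_smul, LinearEquiv.apply_symm_apply, smul_eq_mul, one_mul, φ.apply_symm_apply]
  · refine ⟨e m * φ a, (Ring.jacobson A).mul_mem_left _ ((Ring.map_mem_jacobson_iff φ).mpr ha),
      e.symm 1, e.injective ?_⟩
    rw [he, map_smul, LinearEquiv.apply_symm_apply, smul_eq_mul, mul_one]

end Bimodule

def LinearEquiv.untwist {A M : Type*} [Ring A] [AddCommGroup M] [Module A M] [Module Aᵐᵒᵖ M]
    (e : M ≃ₗ[A] A) (φ : A ≃+* A) (he : ∀ (b : A) (m : M), e (op b • m) = e m * φ b) :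
    M ≃ₗ[Aᵐᵒᵖ] A where
  toFun m := φ.symm (e m)
  invFun x := e.symm (φ x)
  map_add' _ _ := by simp
  map_smul' c m := by
    rw [← op_unop c, he, map_mul, φ.symm_apply_apply, RingHom.id_apply, op_smul_eq_mul]
  left_inv _ := by simp
  right_inv _ := by simp

theorem exists_algEquiv_map_op_smul {k A M : Type*} [Field k] [Ring A] [Algebra k A]
    [FiniteDimensional k A] [AddCommGroup M] [Module k M] [Module A M] [Module Aᵐᵒᵖ M]
    [SMulCommClass A Aᵐᵒᵖ M] [IsScalarTower k A M] [IsScalarTower k Aᵐᵒᵖ M]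
    (er : M ≃ₗ[Aᵐᵒᵖ] A) (el : M ≃ₗ[A] A) :
    ∃ φ : A ≃ₐ[k] A, ∀ (b : A) (m : M), el (op b • m) = el m * φ b := by
  set n := el.symm 1
  have hn : ∀ m, el m • n = m := fun m => el.injective (by simp [n])
  let ψ : A →ₗ[k] A := el.toLinearMap.restrictScalars k ∘ₗ
    (LinearMap.toSpanSingleton Aᵐᵒᵖ M n).restrictScalars k ∘ₗ (opLinearEquiv k).toLinearMap
  have hψ_apply : ∀ b, ψ b = el (op b • n) := fun b => rfl
  have hψ : ∀ b m, el (op b • m) = el m * ψ b := fun b m => by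
    conv_lhs => rw [← hn m]
    rw [← smul_comm, map_smul, smul_eq_mul, hψ_apply]
  have hψ_inj : Function.Injective ψ := by
    refine (injective_iff_map_eq_zero ψ).mpr fun b hb => ?_
    have h := hψ b (er.symm 1)
    rw [hb, mul_zero, LinearEquiv.map_eq_zero_iff, ← map_smul, LinearEquiv.map_eq_zero_iff] at h
    simpa using h
  let Ψ : A →ₐ[k] A := AlgHom.ofLinearMap ψ (by simp [hψ_apply, n])
    (fun b c => by rw [hψ_apply, op_mul, mul_smul, hψ, ← hψ_apply])
  exact ⟨AlgEquiv.ofBijective Ψ ⟨hψ_inj, LinearMap.injective_iff_surjective.mp hψ_inj⟩, hψ⟩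

/-- For a finite-dimensional algebra `A` with Jacobson radical `J` and an
`A`-bimodule `M`, finite-dimensional over `k` and projective on both sides, the following
are equivalent: (1) `M/JM ≅ A/J` as right modules and `M/MJ ≅ A/J` as left modules;
(2) `M/JM ≅ A/J` as left modules and `M/MJ ≅ A/J` as right modules; (3) `M ≅ A` as right
modules and `M ≅ A` as left modules; (4) `M ≅ A_φ` as bimodules for some automorphism `φ`. -/
theorem bimodule_iso_twist_tfae
    {k : Type u} {A : Type v} [Field k] [Ring A] [Algebra k A] [FiniteDimensional k A]
    (M : Type v) [AddCommGroup M] [Module k M]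
    [Module A M] [Module Aᵐᵒᵖ M] [SMulCommClass A Aᵐᵒᵖ M]
    [IsScalarTower k A M] [IsScalarTower k Aᵐᵒᵖ M] [FiniteDimensional k M]
    [Module.Projective A M] [Module.Projective Aᵐᵒᵖ M]
    (J : Ideal A) (hJ : J = Ideal.jacobson ⊥)
    (Jr : Submodule Aᵐᵒᵖ A) (hJr : Jr = Submodule.span Aᵐᵒᵖ (J : Set A))
    (JMl : Submodule A M)
    (hJMl : JMl = Submodule.span A {x : M | ∃ a ∈ J, ∃ m : M, x = a • m})
    (JMr : Submodule Aᵐᵒᵖ M)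
    (hJMr : JMr = Submodule.span Aᵐᵒᵖ {x : M | ∃ a ∈ J, ∃ m : M, x = a • m})
    (MJl : Submodule A M)
    (hMJl : MJl = Submodule.span A {x : M | ∃ a ∈ J, ∃ m : M, x = op a • m})
    (MJr : Submodule Aᵐᵒᵖ M)
    (hMJr : MJr = Submodule.span Aᵐᵒᵖ {x : M | ∃ a ∈ J, ∃ m : M, x = op a • m}) :
    List.TFAE [
      Nonempty ((M ⧸ JMr) ≃ₗ[Aᵐᵒᵖ] (A ⧸ Jr)) ∧
        Nonempty ((M ⧸ MJl) ≃ₗ[A] (A ⧸ (J : Submodule A A))),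
      Nonempty ((M ⧸ JMl) ≃ₗ[A] (A ⧸ (J : Submodule A A))) ∧
        Nonempty ((M ⧸ MJr) ≃ₗ[Aᵐᵒᵖ] (A ⧸ Jr)),
      Nonempty (M ≃ₗ[Aᵐᵒᵖ] A) ∧ Nonempty (M ≃ₗ[A] A),
      ∃ (φ : A ≃ₐ[k] A) (e : M ≃ₗ[A] A), ∀ (b : A) (m : M), e (op b • m) = e m * φ b ] := by
  obtain rfl : J = Ring.jacobson A := hJ.trans Ideal.jacobson_bot
  have : Module.Finite A M := .of_restrictScalars_finite k A M
  have : Module.Finite Aᵐᵒᵖ M := .of_restrictScalars_finite k Aᵐᵒᵖ M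
  have : Module.Finite Aᵐᵒᵖ A := .equiv (opLinearEquiv Aᵐᵒᵖ).symm
  have : Module.Projective Aᵐᵒᵖ A := .of_equiv (opLinearEquiv Aᵐᵒᵖ).symm
  have hJM : (JMl : Set M) = JMr := hJMl ▸ hJMr ▸ coe_span_smul_eq _
  have hMJ : (MJl : Set M) = MJr := hMJl ▸ hMJr ▸ coe_span_op_smul_eq _
  have hJMr_of_JMl : JMl = MJl → JMr = MJr := fun h =>
    SetLike.coe_injective (by rw [← hJM, ← hMJ, h])
  have hJ' : (Ring.jacobson A : Submodule A A) = Ring.jacobson A • ⊤ := (Ideal.mul_top _).symm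
  have hJr' : Jr = Ring.jacobson Aᵐᵒᵖ • ⊤ := by
    rw [hJr, Ideal.coe_eq_setOf_op_smul, span_op_smul_eq_jacobson_smul_top]
  have hJMl' : JMl = Ring.jacobson A • ⊤ := hJMl ▸ (Submodule.ideal_smul_top_eq_span _).symm
  have hMJr' : MJr = Ring.jacobson Aᵐᵒᵖ • ⊤ := hMJr ▸ span_op_smul_eq_jacobson_smul_top
  tfae_have 1 → 2 := by
    rintro ⟨⟨e₁⟩, ⟨e₂⟩⟩
    have hMJ_le : MJr ≤ JMr := hMJr' ▸ Submodule.smul_top_le_of_quotient_equiv e₁ hJr'.ge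
    have hl : JMl = MJl := (hJMl' ▸ Submodule.smul_top_le_of_quotient_equiv e₂ hJ'.ge).antisymm
      (by rwa [← SetLike.coe_subset_coe, hMJ, hJM])
    rw [hl, ← hJMr_of_JMl hl]
    exact ⟨⟨e₂⟩, ⟨e₁⟩⟩
  tfae_have h23 : 2 ↔ 3 := by
    rw [hJ', hJMl', hMJr', hJr', ← Module.Projective.nonempty_linearEquiv_iff_quotient le_rfl,
      ← Module.Projective.nonempty_linearEquiv_iff_quotient le_rfl]
    exact And.comm
  tfae_have 3 → 4 := by
    rintro ⟨⟨er⟩, ⟨el⟩⟩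
    obtain ⟨φ, hφ⟩ := exists_algEquiv_map_op_smul (k := k) er el
    exact ⟨φ, el, hφ⟩
  tfae_have h43 : 4 → 3 := by
    rintro ⟨φ, e, he⟩
    exact ⟨⟨e.untwist φ.toRingEquiv he⟩, ⟨e⟩⟩
  tfae_have 4 → 1 := by
    rintro ⟨φ, e, he⟩
    have hl : JMl = MJl := by
      rw [hJMl, hMJl]; exact span_smul_jacobson_eq_span_op_smul φ.toRingEquiv e he
    obtain ⟨⟨e₁⟩, ⟨e₂⟩⟩ := h23.mpr (h43 ⟨φ, e, he⟩)
    rw [hJMr_of_JMl hl, ← hl]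
    exact ⟨⟨e₂⟩, ⟨e₁⟩⟩
  tfae_finish
end

section
/- Let A be a finite-dimensional self-injective k-algebra without semisimple blocks, let φ be a k-algebra automorphism of A, and let (ξ_I) be a family of invertible elements of A indexed by the proper nonzero right ideals I of A such that φ(I) = ξ_I I for every I and such that for all proper nonzero right ideals I, J and every a ∈ (J:I) one has φ(a)ξ_I − ξ_J a ∈ (0:I) + φ(J). If (ξ'_I) is another family of invertible elements of A with ξ_I − ξ'_I ∈ (0:I) + φ(I) for every proper nonzero right ideal I, then the family (ξ'_I) satisfies the same two properties: φ(I) = ξ'_I I for every I, and φ(a)ξ'_I − ξ'_J a ∈ (0:I) + φ(J) for all proper nonzero right ideals I, J and all a ∈ (J:I). -/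
universe u v

/-- If `(ξ_I)` is a family of invertible elements with `φ(I) = ξ_I I` and
`φ(a)ξ_I − ξ_J a ∈ (0:I) + φ(J)` for all `a ∈ (J:I)`, and `(ξ'_I)` is another family of
invertible elements with `ξ_I − ξ'_I ∈ (0:I) + φ(I)`, then `(ξ'_I)` satisfies the same
two properties. -/
theorem family_replacement
    {k : Type u} {A : Type v} [Field k] [Ring A] [Algebra k A] [FiniteDimensional k A]
    (hselfinj : Module.Injective Aᵐᵒᵖ A)
    (hblocks : ¬ ∃ (A₁ : Type v) (A₂ : Type v) (_ : Ring A₁) (_ : Ring A₂)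
      (_ : Algebra k A₁) (_ : Algebra k A₂),
      Nontrivial A₁ ∧ IsSemisimpleRing A₁ ∧ Nonempty (A ≃ₐ[k] A₁ × A₂))
    (φ : A ≃ₐ[k] A)
    (ξ ξ' : Submodule Aᵐᵒᵖ A → A)
    (hunit : ∀ I : Submodule Aᵐᵒᵖ A, I ≠ ⊥ → I ≠ ⊤ → IsUnit (ξ I))
    (himg : ∀ I : Submodule Aᵐᵒᵖ A, I ≠ ⊥ → I ≠ ⊤ →
      ⇑φ '' (I : Set A) = (ξ I * ·) '' (I : Set A))
    (hnat : ∀ I J : Submodule Aᵐᵒᵖ A, I ≠ ⊥ → I ≠ ⊤ → J ≠ ⊥ → J ≠ ⊤ →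
      ∀ a : A, (∀ x ∈ I, a * x ∈ J) →
        ∃ z w : A, (∀ x ∈ I, z * x = 0) ∧ w ∈ J ∧ φ a * ξ I - ξ J * a = z + φ w)
    (hunit' : ∀ I : Submodule Aᵐᵒᵖ A, I ≠ ⊥ → I ≠ ⊤ → IsUnit (ξ' I))
    (hdiff : ∀ I : Submodule Aᵐᵒᵖ A, I ≠ ⊥ → I ≠ ⊤ →
      ∃ z w : A, (∀ x ∈ I, z * x = 0) ∧ w ∈ I ∧ ξ I - ξ' I = z + φ w) :
    (∀ I : Submodule Aᵐᵒᵖ A, I ≠ ⊥ → I ≠ ⊤ →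
      ⇑φ '' (I : Set A) = (ξ' I * ·) '' (I : Set A)) ∧
    (∀ I J : Submodule Aᵐᵒᵖ A, I ≠ ⊥ → I ≠ ⊤ → J ≠ ⊥ → J ≠ ⊤ →
      ∀ a : A, (∀ x ∈ I, a * x ∈ J) →
        ∃ z w : A, (∀ x ∈ I, z * x = 0) ∧ w ∈ J ∧ φ a * ξ' I - ξ' J * a = z + φ w) := by
  have hart : IsArtinian Aᵐᵒᵖ A := isArtinian_of_tower k inferInstance
  -- part 1
  have part1 : ∀ I : Submodule Aᵐᵒᵖ A, I ≠ ⊥ → I ≠ ⊤ →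
      ⇑φ '' (I : Set A) = (ξ' I * ·) '' (I : Set A) := by
    intro I hb ht
    obtain ⟨z, w, hz, hwI, hzw⟩ := hdiff I hb ht
    -- φ w ∈ φ '' I = ξ I '' I
    have hφw : φ w ∈ (ξ I * ·) '' (I : Set A) := by
      rw [← himg I hb ht]; exact ⟨w, hwI, rfl⟩
    obtain ⟨y, hyI, hy⟩ := hφw
    -- key identity
    have hy' : ξ I * y = φ w := hy
    have key : ∀ x : A, x ∈ I → ξ' I * x = ξ I * ((1 - y) * x) := by
      intro x hx
      have e1 : ξ' I = ξ I - (z + φ w) := by rw [← hzw]; abel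
      have h0 : z * x = 0 := hz x hx
      calc ξ' I * x = ξ I * x - z * x - (ξ I * y) * x := by rw [e1, ← hy']; noncomm_ring
        _ = ξ I * ((1 - y) * x) := by rw [h0]; noncomm_ring
    -- endomorphism x ↦ (1-y)*x of I
    have hmem : ∀ x : A, x ∈ I → (1 - y) * x ∈ I := by
      intro x hx
      have : y * x ∈ I := by
        have := I.smul_mem (MulOpposite.op x) hyI
        simpa [MulOpposite.smul_eq_mul_unop] using this
      have : x - y * x ∈ I := I.sub_mem hx this
      simpa [sub_mul] using this
    let f : I →ₗ[Aᵐᵒᵖ] I :=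
      { toFun := fun x => ⟨(1 - y) * x.1, hmem x.1 x.2⟩
        map_add' := by intro a b; ext; simp [mul_add]
        map_smul' := by
          intro c a; ext
          simp [MulOpposite.smul_eq_mul_unop, mul_assoc] }
    have finj : Function.Injective f := by
      intro a b hab
      have : (1 - y) * a.1 = (1 - y) * b.1 := congrArg Subtype.val hab
      have h2 : ξ' I * a.1 = ξ' I * b.1 := by
        rw [key a.1 a.2, key b.1 b.2, this]
      ext
      exact (hunit' I hb ht).mul_left_cancel h2
    have fsurj : Function.Surjective f :=
      IsArtinian.surjective_of_injective_endomorphism f finj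
    ext v
    constructor
    · rintro ⟨x, hx, rfl⟩
      have : φ x ∈ (ξ I * ·) '' (I : Set A) := by
        rw [← himg I hb ht]; exact ⟨x, hx, rfl⟩
      obtain ⟨x', hx', hxe⟩ := this
      obtain ⟨x'', hx''⟩ := fsurj ⟨x', hx'⟩
      have hval : (1 - y) * x''.1 = x' := congrArg Subtype.val hx''
      refine ⟨x''.1, x''.2, ?_⟩
      show ξ' I * (x'' : A) = φ x
      rw [key x''.1 x''.2, hval]
      exact hxe
    · rintro ⟨x, hx, rfl⟩
      have : ξ' I * x = ξ I * ((1 - y) * x) := key x hx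
      rw [himg I hb ht]
      exact ⟨(1 - y) * x, hmem x hx, this.symm⟩
  refine ⟨part1, ?_⟩
  -- part 2
  intro I J hIb hIt hJb hJt a ha
  obtain ⟨z, w, hz, hwJ, hzw⟩ := hnat I J hIb hIt hJb hJt a ha
  obtain ⟨zI, wI, hzI, hwI, hIeq⟩ := hdiff I hIb hIt
  obtain ⟨zJ, wJ, hzJ, hwJ', hJeq⟩ := hdiff J hJb hJt
  -- φ wJ ∈ ξ J '' J
  have hφwJ : φ wJ ∈ (ξ J * ·) '' (J : Set A) := by
    rw [← himg J hJb hJt]; exact ⟨wJ, hwJ', rfl⟩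
  obtain ⟨yJ, hyJ, hyJe⟩ := hφwJ
  -- yJ * a ∈ J
  have hyJa : yJ * a ∈ J := by
    have := J.smul_mem (MulOpposite.op a) hyJ
    simpa [MulOpposite.smul_eq_mul_unop] using this
  -- φ wJ * a = φ w'' with w'' ∈ J
  have : ξ J * (yJ * a) ∈ ⇑φ '' (J : Set A) := by
    rw [himg J hJb hJt]; exact ⟨yJ * a, hyJa, rfl⟩
  obtain ⟨w'', hw''J, hw''⟩ := this
  have hφwJa : φ wJ * a = φ w'' := by rw [hw'', ← hyJe, mul_assoc]
  refine ⟨z - φ a * zI + zJ * a, w - a * wI + w'', ?_, ?_, ?_⟩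
  · intro x hx
    have h1 : z * x = 0 := hz x hx
    have h2 : zI * x = 0 := hzI x hx
    have h3 : zJ * (a * x) = 0 := hzJ (a * x) (ha x hx)
    calc (z - φ a * zI + zJ * a) * x
        = z * x - φ a * (zI * x) + zJ * (a * x) := by noncomm_ring
      _ = 0 := by rw [h1, h2, h3]; simp
  · exact J.add_mem (J.sub_mem hwJ (ha wI hwI)) hw''J
  · have e1 : ξ' I = ξ I - (zI + φ wI) := by rw [← hIeq]; abel
    have e2 : ξ' J = ξ J - (zJ + φ wJ) := by rw [← hJeq]; abel
    have hzval : z = φ a * ξ I - ξ J * a - φ w := by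
      rw [eq_sub_iff_add_eq]; exact hzw.symm
    rw [e1, e2, hzval, map_add, map_sub, map_mul, ← hφwJa]
    noncomm_ring
end

section
/- Let A be a finite-dimensional self-injective k-algebra such that the left annihilator of rad(A)² is contained in rad(A)², i.e. {a ∈ A | a·rad(A)² = 0} ⊆ rad(A)² (this is the condition soc²(A) ⊆ rad(A)² and forces A to have no semisimple blocks), and let φ be a stably inner automorphism of A. Then the automorphism of the quotient algebra A/rad(A)² induced by φ is inner, i.e. there exists an invertible element u of A/rad(A)² with φ(a) + rad(A)² = u⁻¹(a + rad(A)²)u for all a ∈ A. -/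
universe u v w

section StablePrelude

variable {k : Type u} {A : Type v} [Field k] [Ring A] [Algebra k A]

/-- The right `A`-module `M` twisted by the algebra automorphism `φ`:
same underlying additive group, with right action `m ·_φ a = m · φ a`. -/
def Tw (_φ : A ≃ₐ[k] A) (M : Type w) : Type w := M

/-- The identity function, viewed as a map `M → Tw φ M`. -/
def Tw.of (φ : A ≃ₐ[k] A) {M : Type w} (m : M) : Tw φ M := m

instance (φ : A ≃ₐ[k] A) (M : Type w) [inst : AddCommGroup M] : AddCommGroup (Tw φ M) := inst

instance (φ : A ≃ₐ[k] A) (M : Type w) [AddCommGroup M] [Module Aᵐᵒᵖ M] :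
    Module Aᵐᵒᵖ (Tw φ M) :=
  Module.compHom M (RingHom.op φ.toRingEquiv.toRingHom)

/-- A right-module map `f : M → N` is also `A`-linear as a map `M_φ → N_φ`
(with the same underlying function). -/
def twMap (φ : A ≃ₐ[k] A) {M N : Type w} [AddCommGroup M] [Module Aᵐᵒᵖ M]
    [AddCommGroup N] [Module Aᵐᵒᵖ N] (f : M →ₗ[Aᵐᵒᵖ] N) :
    Tw φ M →ₗ[Aᵐᵒᵖ] Tw φ N where
  toFun m := Tw.of φ (f m)
  map_add' := f.map_add
  map_smul' r m := f.map_smul (RingHom.op φ.toRingEquiv.toRingHom r) m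

/-- `f` factors through a projective module. -/
def FactorsThroughProjective {R : Type*} [Ring R] {M N : Type w}
    [AddCommGroup M] [Module R M] [AddCommGroup N] [Module R N] (f : M →ₗ[R] N) : Prop :=
  ∃ (P : Type w) (_ : AddCommGroup P) (_ : Module R P),
    Module.Projective R P ∧ ∃ (g : M →ₗ[R] P) (h : P →ₗ[R] N), f = h ∘ₗ g

/-- An automorphism `φ` of `A` is *stably inner* if restriction of scalars along `φ`
induces a functor on the stable category of finitely generated right `A`-modules that is
isomorphic to the identity functor: there is a family of maps `η_M : M → M_φ` that is
natural up to maps factoring through projectives and consists of stable isomorphisms. -/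
def StablyInner (φ : A ≃ₐ[k] A) : Prop :=
  ∃ η : ∀ (M : Type v) (_ : AddCommGroup M) (_ : Module Aᵐᵒᵖ M) (_ : Module.Finite Aᵐᵒᵖ M),
      M →ₗ[Aᵐᵒᵖ] Tw φ M,
    (∀ (M : Type v) (iM : AddCommGroup M) (mM : Module Aᵐᵒᵖ M) (fM : Module.Finite Aᵐᵒᵖ M)
        (N : Type v) (iN : AddCommGroup N) (mN : Module Aᵐᵒᵖ N) (fN : Module.Finite Aᵐᵒᵖ N)
        (f : M →ₗ[Aᵐᵒᵖ] N),
        FactorsThroughProjective (η N iN mN fN ∘ₗ f - twMap φ f ∘ₗ η M iM mM fM)) ∧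
    (∀ (M : Type v) (iM : AddCommGroup M) (mM : Module Aᵐᵒᵖ M) (fM : Module.Finite Aᵐᵒᵖ M),
        ∃ ζ : Tw φ M →ₗ[Aᵐᵒᵖ] M,
          FactorsThroughProjective (ζ ∘ₗ η M iM mM fM - LinearMap.id) ∧
          FactorsThroughProjective (η M iM mM fM ∘ₗ ζ - LinearMap.id))

end StablePrelude

/-!
Write `J = rad(A)`. Since `J²` is two-sided and `φ`-stable, `M = A/J²` and its twist `M_φ`
are right modules annihilated by `J²`. The condition `soc²(A) ⊆ J²` kills every map between
such modules that factors through a projective: the image of an element annihilated by `J²` in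
a free module has coordinates in the left annihilator of `J²`, hence in `J²`. So the stable
isomorphism `η_M : M → M_φ` is an honest isomorphism, natural for all endomorphisms of `M`, in
particular for left multiplications. With `η(1̄) = v̄`, linearity gives `η(ā) = v̄ φ(a)` and
naturality gives `η(ā) = a v̄`; surjectivity of `η` makes `v̄` invertible in `A/J²`.
-/

open MulOpposite

theorem Module.Projective.map_eq_zero_of_smul_eq_zero {R : Type*} [Ring R] {I : Ideal R}
    {N P : Type*} [AddCommGroup N] [Module Rᵐᵒᵖ N] [AddCommGroup P] [Module Rᵐᵒᵖ P]
    [Module.Projective Rᵐᵒᵖ P]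
    (hI : ∀ a : R, (∀ x ∈ I, a * x = 0) → a ∈ I)
    (hN : ∀ j ∈ I, ∀ y : N, op j • y = 0) (h : P →ₗ[Rᵐᵒᵖ] N) {x : P}
    (hx : ∀ j ∈ I, op j • x = 0) : h x = 0 := by
  obtain ⟨s, hs⟩ := Module.Projective.out (R := Rᵐᵒᵖ) (P := P)
  have hcoeff : ∀ p, (s x p).unop ∈ I := fun p ↦ hI _ fun j hj ↦ by
    have hsx : op j • s x = 0 := by rw [← map_smul, hx j hj, map_zero]
    simpa using congr(unop ($hsx p))
  rw [← hs x, Finsupp.linearCombination_apply, map_finsuppSum]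
  refine Finset.sum_eq_zero fun p _ ↦ show h (s x p • p) = 0 from ?_
  rw [map_smul, ← op_unop (s x p)]
  exact hN _ (hcoeff p) _

theorem FactorsThroughProjective.eq_zero {R : Type*} [Ring R] {I : Ideal R} {M N : Type w}
    [AddCommGroup M] [Module Rᵐᵒᵖ M] [AddCommGroup N] [Module Rᵐᵒᵖ N]
    (hI : ∀ a : R, (∀ x ∈ I, a * x = 0) → a ∈ I)
    (hM : ∀ j ∈ I, ∀ x : M, op j • x = 0) (hN : ∀ j ∈ I, ∀ y : N, op j • y = 0)
    {f : M →ₗ[Rᵐᵒᵖ] N} (hf : FactorsThroughProjective f) : f = 0 := by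
  obtain ⟨P, _, _, _, g, h, rfl⟩ := hf
  ext x
  exact Module.Projective.map_eq_zero_of_smul_eq_zero hI hN h fun j hj ↦ by
    rw [← map_smul, hM j hj, map_zero]

namespace Ideal

variable {R S : Type*} [Ring R] [Ring S]

theorem comap_jacobson_bot_of_bijective {f : R →+* S} (hf : Function.Bijective f) :
    (jacobson (⊥ : Ideal S)).comap f = jacobson ⊥ := by
  rw [comap_jacobson_of_surjective hf.2, comap_bot_of_injective f hf.1]

theorem mul_le_comap_mul {I J : Ideal R} {K L : Ideal S} {f : R →+* S} (hI : I ≤ K.comap f)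
    (hJ : J ≤ L.comap f) : I * J ≤ (K * L).comap f :=
  mul_le.2 fun r hr s hs ↦ by rw [mem_comap, map_mul]; exact mul_mem_mul (hI hr) (hJ hs)

theorem span_mul_set_eq_mul (I J : Ideal R) :
    span {x | ∃ a ∈ I, ∃ b ∈ J, x = a * b} = I * J :=
  le_antisymm (span_le.2 fun _ ⟨_, ha, _, hb, hx⟩ ↦ hx ▸ mul_mem_mul ha hb)
    (mul_le.2 fun a ha b hb ↦ subset_span ⟨a, ha, b, hb, rfl⟩)

theorem mul_sub_one_mem_of_mul_sub_one_mem {I : Ideal R} [I.IsTwoSided] {u v w : R}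
    (hu : u * v - 1 ∈ I) (hw : v * w - 1 ∈ I) : v * u - 1 ∈ I := by
  simp only [← Quotient.eq, map_mul, map_one] at hu hw ⊢
  rwa [left_inv_eq_right_inv hu hw]

def toRightIdeal (I : Ideal R) [I.IsTwoSided] : Submodule Rᵐᵒᵖ R where
  carrier := I
  add_mem' := I.add_mem
  zero_mem' := I.zero_mem
  smul_mem' c _ hx := I.mul_mem_right c.unop hx

end Ideal

instance Module.Finite.opposite_self {R : Type*} [Ring R] : Module.Finite Rᵐᵒᵖ R :=
  .of_surjective (LinearMap.toSpanSingleton Rᵐᵒᵖ R 1) fun x ↦ ⟨op x, one_mul x⟩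

section TwistedQuotient

variable {k : Type u} {A : Type v} [Field k] [Ring A] [Algebra k A]

@[simp]
theorem Tw.op_smul_of (φ : A ≃ₐ[k] A) {M : Type w} [AddCommGroup M] [Module Aᵐᵒᵖ M] (a : A)
    (m : M) : op a • Tw.of φ m = Tw.of φ (op (φ a) • m) :=
  rfl

theorem Tw.op_smul_eq_zero {φ : A ≃ₐ[k] A} {I : Ideal A} (hφ : ∀ j ∈ I, φ j ∈ I)
    {M : Type w} [AddCommGroup M] [Module Aᵐᵒᵖ M] (hM : ∀ j ∈ I, ∀ x : M, op j • x = 0)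
    (j : A) (hj : j ∈ I) (y : Tw φ M) : op j • y = 0 :=
  hM (φ j) (hφ j hj) y

theorem Ideal.op_smul_quotient_eq_zero (I : Ideal A) [I.IsTwoSided] (j : A) (hj : j ∈ I)
    (x : A ⧸ I.toRightIdeal) : op j • x = 0 := by
  induction x using Submodule.Quotient.induction_on with
  | H a => exact (Submodule.Quotient.mk_eq_zero _).2 (I.mul_mem_left a hj)

theorem exists_inner_mod_of_natural_surjective {I : Ideal A} [I.IsTwoSided] {φ : A ≃ₐ[k] A}
    (η : A ⧸ I.toRightIdeal →ₗ[Aᵐᵒᵖ] Tw φ (A ⧸ I.toRightIdeal))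
    (hnat : ∀ f : Module.End Aᵐᵒᵖ (A ⧸ I.toRightIdeal), η ∘ₗ f = twMap φ f ∘ₗ η)
    (hsurj : Function.Surjective η) :
    ∃ u v : A, u * v - 1 ∈ I ∧ v * u - 1 ∈ I ∧ ∀ a : A, v * φ a - a * v ∈ I := by
  let mk : A →ₗ[Aᵐᵒᵖ] A ⧸ I.toRightIdeal := I.toRightIdeal.mkQ
  have mk_eq {x y : A} : mk x = mk y ↔ x - y ∈ I := Submodule.Quotient.eq _
  have mk_mul (x a : A) : mk (x * a) = op a • mk x := (map_smul mk (op a) x).symm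
  obtain ⟨v, hv⟩ : ∃ v, Tw.of φ (mk v) = η (mk 1) := I.toRightIdeal.mkQ_surjective (η (mk 1))
  have hright (a : A) : η (mk a) = Tw.of φ (mk (v * φ a)) := by
    rw [show mk a = op a • mk 1 by rw [← mk_mul, one_mul], map_smul, ← hv, Tw.op_smul_of,
      ← mk_mul]
  have hleft (a : A) : η (mk a) = Tw.of φ (mk (a * v)) := by
    let mulLeft := I.toRightIdeal.mapQ I.toRightIdeal (DistribSMul.toLinearMap Aᵐᵒᵖ A a)
      fun x hx ↦ I.mul_mem_left a hx
    have hmulLeft (x : A) : mulLeft (mk x) = mk (a * x) := rfl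
    rw [show mk a = mulLeft (mk 1) by rw [hmulLeft, mul_one], ← LinearMap.comp_apply, hnat,
      LinearMap.comp_apply, ← hv]
    exact congrArg (Tw.of φ) (hmulLeft v)
  have hcomm (a : A) : v * φ a - a * v ∈ I := mk_eq.1 ((hright a).symm.trans (hleft a))
  obtain ⟨c', hc⟩ := hsurj (Tw.of φ (mk 1))
  obtain ⟨c, rfl⟩ := I.toRightIdeal.mkQ_surjective c'
  have hcv : c * v - 1 ∈ I := mk_eq.1 ((hleft c).symm.trans hc)
  have hvc : v * φ c - 1 ∈ I := mk_eq.1 ((hright c).symm.trans hc)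
  exact ⟨c, v, hcv, Ideal.mul_sub_one_mem_of_mul_sub_one_mem hcv hvc, hcomm⟩

end TwistedQuotient

theorem stablyInner_inner_mod_rad_sq_general
    {k : Type u} {A : Type v} [Field k] [Ring A] [Algebra k A]
    (φ : A ≃ₐ[k] A) (hφ : StablyInner φ)
    (J2 : Ideal A)
    (hJ2 : J2 = Submodule.span A {x : A | ∃ a ∈ Ideal.jacobson (⊥ : Ideal A),
      ∃ b ∈ Ideal.jacobson (⊥ : Ideal A), x = a * b})
    (hsoc : ∀ a : A, (∀ x ∈ J2, a * x = 0) → a ∈ J2) :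
    ∃ u v : A, u * v - 1 ∈ J2 ∧ v * u - 1 ∈ J2 ∧ ∀ a : A, v * φ a - a * v ∈ J2 := by
  have hJ2 : J2 = Ideal.jacobson ⊥ * Ideal.jacobson ⊥ := hJ2.trans (Ideal.span_mul_set_eq_mul _ _)
  have : J2.IsTwoSided := hJ2 ▸ inferInstance
  have hφJ2 : ∀ j ∈ J2, φ j ∈ J2 := by
    have hJ := (Ideal.comap_jacobson_bot_of_bijective (f := (φ : A →+* A)) φ.bijective).ge
    exact hJ2 ▸ Ideal.mul_le_comap_mul hJ hJ
  obtain ⟨η, hnat, hiso⟩ := hφ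
  let M := A ⧸ J2.toRightIdeal
  have hM := J2.op_smul_quotient_eq_zero
  have hTwM := Tw.op_smul_eq_zero hφJ2 hM
  obtain ⟨ζ, -, hηζ⟩ := hiso M _ _ inferInstance
  refine exists_inner_mod_of_natural_surjective (η M _ _ inferInstance) (fun f ↦ ?_)
    fun y ↦ ⟨ζ y, ?_⟩
  · exact sub_eq_zero.1 (FactorsThroughProjective.eq_zero hsoc hM hTwM (hnat M _ _ _ M _ _ _ f))
  · exact sub_eq_zero.1 congr($(FactorsThroughProjective.eq_zero hsoc hTwM hTwM hηζ) y)

/-- If `A` is a finite-dimensional self-injective algebra with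
`soc²(A) ⊆ rad(A)²` (i.e. the left annihilator of `rad(A)²` is contained in `rad(A)²`)
and `φ` is stably inner, then `φ` induces an inner automorphism of `A/rad(A)²`. -/
theorem stablyInner_inner_mod_rad_sq
    {k : Type u} {A : Type v} [Field k] [Ring A] [Algebra k A] [FiniteDimensional k A]
    (hselfinj : Module.Injective Aᵐᵒᵖ A)
    (φ : A ≃ₐ[k] A) (hφ : StablyInner φ)
    (J2 : Ideal A)
    (hJ2 : J2 = Submodule.span A {x : A | ∃ a ∈ Ideal.jacobson (⊥ : Ideal A),
      ∃ b ∈ Ideal.jacobson (⊥ : Ideal A), x = a * b})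
    (hsoc : ∀ a : A, (∀ x ∈ J2, a * x = 0) → a ∈ J2) :
    ∃ u v : A, u * v - 1 ∈ J2 ∧ v * u - 1 ∈ J2 ∧ ∀ a : A, v * φ a - a * v ∈ J2 :=
  stablyInner_inner_mod_rad_sq_general φ hφ J2 hJ2 hsoc
end

section
/- Let A be a finite-dimensional self-injective k-algebra, let soc(A) denote the socle of A as a right A-module (a two-sided ideal, equal to the left socle since A is self-injective, so φ(soc(A)) = soc(A) for every automorphism φ), and let φ be a k-algebra automorphism of A such that the automorphism of A/soc(A) induced by φ is inner, i.e. there exists an invertible element v of A/soc(A) with φ(a) + soc(A) = v⁻¹(a + soc(A))v for all a ∈ A. Then φ is stably inner. -/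
universe u v w

/-!
Every finitely generated module `M` over a self-injective artinian algebra is, up to a projective
summand, annihilated by `soc(A)`: if `m s ≠ 0` with `s ∈ soc(A)`, then `a ↦ m a` is injective on a
simple `S ⊆ soc(A)`, injectivity of `A` gives a retraction `r : M → A` on `S`, and the Fitting
decomposition of `r ∘ (a ↦ m a)` splits off a nonzero projective summand of `M` inside `m A`.
Choosing an endomorphism `e` of `M` with `e - 1` factoring through a projective and with minimal
image, the image of `e` is therefore annihilated by `soc(A)`, hence is a module over `A / soc(A)`,
on which right multiplication by `v` is `A`-linear into the twist by `φ`. So `η_M(m) = e(m) v` is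
the required stable isomorphism, with stable inverse `x ↦ e(x) u`, and naturality holds modulo
maps that factor through `e - 1`.
-/

open MulOpposite

section FactorsThroughProjective

variable {R : Type*} [Ring R] {M N M' N' : Type w} [AddCommGroup M] [Module R M]
  [AddCommGroup N] [Module R N] [AddCommGroup M'] [Module R M'] [AddCommGroup N'] [Module R N']

theorem factorsThroughProjective_comp {P : Type w} [AddCommGroup P] [Module R P]
    [Module.Projective R P] (g : M →ₗ[R] P) (h : P →ₗ[R] N) :
    FactorsThroughProjective (h ∘ₗ g) :=
  ⟨P, _, _, ‹_›, g, h, rfl⟩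

namespace FactorsThroughProjective

variable {f f' : M →ₗ[R] N}

theorem zero : FactorsThroughProjective (0 : M →ₗ[R] N) :=
  factorsThroughProjective_comp (P := PUnit) 0 0

theorem postcomp (hf : FactorsThroughProjective f) (g : N →ₗ[R] N') :
    FactorsThroughProjective (g ∘ₗ f) := by
  obtain ⟨P, _, _, _, f₁, f₂, rfl⟩ := hf
  exact factorsThroughProjective_comp f₁ (g ∘ₗ f₂)

theorem precomp (hf : FactorsThroughProjective f) (g : M' →ₗ[R] M) :
    FactorsThroughProjective (f ∘ₗ g) := by
  obtain ⟨P, _, _, _, f₁, f₂, rfl⟩ := hf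
  exact factorsThroughProjective_comp (f₁ ∘ₗ g) f₂

theorem sub (hf : FactorsThroughProjective f) (hf' : FactorsThroughProjective f') :
    FactorsThroughProjective (f - f') := by
  obtain ⟨P, _, _, _, g, h, rfl⟩ := hf
  obtain ⟨P', _, _, _, g', h', rfl⟩ := hf'
  convert factorsThroughProjective_comp (g.prod g')
    (h ∘ₗ LinearMap.fst R P P' - h' ∘ₗ LinearMap.snd R P P')
  ext x
  simp

theorem comp_self_sub_id {e : M →ₗ[R] M} (he : FactorsThroughProjective (e - LinearMap.id)) :
    FactorsThroughProjective (e ∘ₗ e - LinearMap.id) := by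
  convert he.postcomp (e + LinearMap.id) using 1
  ext x
  simp

end FactorsThroughProjective

end FactorsThroughProjective

section Twist

variable {k : Type u} {A : Type v} [Field k] [Ring A] [Algebra k A] (φ : A ≃ₐ[k] A)

theorem Module.Projective.tw {P : Type w} [AddCommGroup P] [Module Aᵐᵒᵖ P]
    [Module.Projective Aᵐᵒᵖ P] : Module.Projective Aᵐᵒᵖ (Tw φ P) := by
  let σ : Aᵐᵒᵖ ≃+* Aᵐᵒᵖ := φ.symm.toRingEquiv.op
  have := RingHomInvPair.of_ringEquiv σ
  have := RingHomInvPair.of_ringEquiv_symm σ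
  exact .of_equiv (σ := (σ : Aᵐᵒᵖ →+* Aᵐᵒᵖ))
    { toFun := Tw.of φ
      invFun x := x
      map_add' _ _ := rfl
      map_smul' r x := by
        show Tw.of φ (r • x) = Tw.of φ (op (φ (unop (σ r))) • x)
        simp [σ]
      left_inv _ := rfl
      right_inv _ := rfl }

theorem FactorsThroughProjective.twMap {M N : Type w} [AddCommGroup M] [Module Aᵐᵒᵖ M]
    [AddCommGroup N] [Module Aᵐᵒᵖ N] {f : M →ₗ[Aᵐᵒᵖ] N} (hf : FactorsThroughProjective f) :
    FactorsThroughProjective (_root_.twMap φ f) := by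
  obtain ⟨P, _, _, _, g, h, rfl⟩ := hf
  have := Module.Projective.tw φ (P := P)
  exact factorsThroughProjective_comp (_root_.twMap φ g) (_root_.twMap φ h)

end Twist

section Socle

variable (R M : Type*) [Ring R] [AddCommGroup M] [Module R M]

def socle : Submodule R M := sSup {S : Submodule R M | IsSimpleModule R S}

variable {R M}

theorem socle_isFullyInvariant : (socle R M).IsFullyInvariant := fun f ↦
  sSup_le fun S (_ : IsSimpleModule R S) ↦ Submodule.map_le_iff_le_comap.mp <| by
    rw [← S.range_subtype, ← LinearMap.range_comp]
    obtain inj | eq := (f ∘ₗ S.subtype).injective_or_eq_zero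
    · have := IsSimpleModule.congr (LinearEquiv.ofInjective _ inj).symm
      exact le_sSup this
    · simp [eq]

theorem exists_isSimpleModule_injective_of_not_socle_le_ker {N : Type*} [AddCommGroup N]
    [Module R N] {f : M →ₗ[R] N} (hf : ¬ socle R M ≤ LinearMap.ker f) :
    ∃ S : Submodule R M, IsSimpleModule R S ∧ Function.Injective (f ∘ₗ S.subtype) := by
  obtain ⟨S, hS, hSf⟩ := not_forall₂.mp (mt sSup_le hf)
  have : IsSimpleModule R S := hS
  refine ⟨S, hS, (f ∘ₗ S.subtype).injective_or_eq_zero.resolve_right fun h ↦ hSf ?_⟩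
  intro x hx
  exact LinearMap.congr_fun h ⟨x, hx⟩

end Socle

theorem mul_mem_socle {A : Type*} [Ring A] (a : A) {s : A} (hs : s ∈ socle Aᵐᵒᵖ A) :
    a * s ∈ socle Aᵐᵒᵖ A :=
  socle_isFullyInvariant (LinearMap.mulLeft Aᵐᵒᵖ a) hs

theorem exists_isCompl_ge_retraction {R X Y : Type*} [Ring R] [AddCommGroup X] [Module R X]
    [IsNoetherian R X] [IsArtinian R X] [AddCommGroup Y] [Module R Y] (f : X →ₗ[R] Y)
    (r : Y →ₗ[R] X) {S : Submodule R X} (hS : ∀ x ∈ S, r (f x) = x) :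
    ∃ Q C : Submodule R X, IsCompl Q C ∧ S ≤ Q ∧ ∃ ρ : Y →ₗ[R] Q, ∀ q : Q, ρ (f q) = q := by
  set ψ := r ∘ₗ f
  obtain ⟨n, hc, hn⟩ :=
    (ψ.eventually_isCompl_ker_pow_range_pow.and (Filter.eventually_ge_atTop 1)).exists
  set Q := LinearMap.range (ψ ^ n)
  have hψQ : ∀ x ∈ Q, ψ x ∈ Q := by
    rintro _ ⟨y, rfl⟩
    exact ⟨ψ y, by rw [← Module.End.mul_apply, ← pow_succ, pow_succ']; rfl⟩
  set θ := ψ.restrict hψQ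
  have hθ : Function.Injective θ := by
    refine (injective_iff_map_eq_zero θ).mpr fun q hq ↦ ?_
    have hψq : ψ q = 0 := congrArg Subtype.val hq
    have hker : (q : X) ∈ LinearMap.ker (ψ ^ n) := by
      obtain ⟨m, rfl⟩ := Nat.exists_eq_add_of_le' hn
      rw [LinearMap.mem_ker, pow_succ, Module.End.mul_apply, hψq, map_zero]
    exact Subtype.ext (Submodule.disjoint_def.mp hc.disjoint _ hker q.2)
  let θe := LinearEquiv.ofBijective θ (IsArtinian.bijective_of_injective_endomorphism θ hθ)
  refine ⟨Q, _, hc.symm, fun x hx ↦ ⟨x, ?_⟩, θe.symm ∘ₗ Q.projectionOnto _ hc.symm ∘ₗ r,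
    fun q ↦ ?_⟩
  · rw [Module.End.pow_apply]
    exact Function.iterate_fixed (hS x hx) n
  · have : Q.projectionOnto _ hc.symm (r (f q)) = θe q :=
      Submodule.projectionOnto_apply_left hc.symm (θ q)
    simp [this]

theorem range_sub_comp_lt {R M : Type*} [Ring R] [AddCommGroup M] [Module R M]
    {e p : M →ₗ[R] M} (hp : p ∘ₗ p = p) (hp0 : p ≠ 0)
    (hpe : LinearMap.range p ≤ LinearMap.range e) :
    LinearMap.range (e - p ∘ₗ e) < LinearMap.range e := by
  refine lt_of_le_of_ne ?_ fun h ↦ ?_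
  · rintro _ ⟨x, rfl⟩
    exact sub_mem (LinearMap.mem_range_self e x) (hpe (LinearMap.mem_range_self p (e x)))
  obtain ⟨x, hx⟩ : ∃ x, p x ≠ 0 := not_forall.mp fun h' ↦ hp0 (LinearMap.ext h')
  obtain ⟨y, hy⟩ : p x ∈ LinearMap.range (e - p ∘ₗ e) := h ▸ hpe ⟨x, rfl⟩
  have hpp : ∀ z, p (p z) = p z := LinearMap.congr_fun hp
  apply hx
  calc p x = p (p x) := (hpp x).symm
    _ = 0 := by simp [← hy, hpp]

def opLinearEquivSelf (A : Type v) [Ring A] : A ≃ₗ[Aᵐᵒᵖ] Aᵐᵒᵖ where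
  toFun := op
  invFun := unop
  map_add' _ _ := rfl
  map_smul' _ _ := rfl
  left_inv _ := rfl
  right_inv _ := rfl

section SelfInjective

variable {A : Type v} [Ring A]

instance : Module.Projective Aᵐᵒᵖ A := .of_equiv' (opLinearEquivSelf A).symm

theorem exists_idempotent_factorsThroughProjective_of_smul_ne_zero [IsNoetherian Aᵐᵒᵖ A]
    [IsArtinian Aᵐᵒᵖ A] [Module.Injective Aᵐᵒᵖ A] {M : Type v} [AddCommGroup M]
    [Module Aᵐᵒᵖ M] {m : M} {s : A} (hs : s ∈ socle Aᵐᵒᵖ A) (hms : op s • m ≠ 0) :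
    ∃ p : M →ₗ[Aᵐᵒᵖ] M, FactorsThroughProjective p ∧ p ∘ₗ p = p ∧ p ≠ 0 ∧
      LinearMap.range p ≤ Submodule.span Aᵐᵒᵖ {m} := by
  let f : A →ₗ[Aᵐᵒᵖ] M := LinearMap.toSpanSingleton Aᵐᵒᵖ M m ∘ₗ opLinearEquivSelf A
  obtain ⟨S, hS, hSf⟩ :=
    exists_isSimpleModule_injective_of_not_socle_le_ker (f := f) fun h ↦ hms (h hs)
  obtain ⟨r, hr⟩ := Module.Injective.out _ hSf S.subtype
  obtain ⟨Q, C, hQC, hSQ, ρ, hρ⟩ := exists_isCompl_ge_retraction f r fun x hx ↦ hr ⟨x, hx⟩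
  have : Module.Projective Aᵐᵒᵖ Q :=
    .of_split Q.subtype (Q.projectionOnto C hQC) (Q.projectionOnto_comp_subtype hQC)
  refine ⟨f ∘ₗ Q.subtype ∘ₗ ρ, factorsThroughProjective_comp ρ (f ∘ₗ Q.subtype), ?_, ?_, ?_⟩
  · ext x
    simp [hρ]
  · have := IsSimpleModule.nontrivial Aᵐᵒᵖ S
    obtain ⟨x, hx⟩ := exists_ne (0 : S)
    intro hp
    have hfix : ρ (f x) = ⟨x, hSQ x.2⟩ := hρ ⟨x, hSQ x.2⟩
    have := LinearMap.congr_fun hp (f x)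
    simp only [LinearMap.comp_apply, hfix, Submodule.subtype_apply, LinearMap.zero_apply] at this
    exact hx (hSf (by simpa using this))
  · rintro _ ⟨x, rfl⟩
    exact Submodule.smul_mem _ _ (Submodule.mem_span_singleton_self m)

theorem exists_factorsThroughProjective_sub_id_smul_eq_zero [IsNoetherian Aᵐᵒᵖ A]
    [IsArtinian Aᵐᵒᵖ A] [Module.Injective Aᵐᵒᵖ A] {M : Type v} [AddCommGroup M]
    [Module Aᵐᵒᵖ M] [IsArtinian Aᵐᵒᵖ M] :
    ∃ e : M →ₗ[Aᵐᵒᵖ] M, FactorsThroughProjective (e - LinearMap.id) ∧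
      ∀ x, ∀ s ∈ socle Aᵐᵒᵖ A, op s • e x = 0 := by
  obtain ⟨_, ⟨e, he, rfl⟩, hmin⟩ := IsArtinian.set_has_minimal
    {N | ∃ e : M →ₗ[Aᵐᵒᵖ] M, FactorsThroughProjective (e - LinearMap.id) ∧ LinearMap.range e = N}
    ⟨_, LinearMap.id, by simpa using FactorsThroughProjective.zero, rfl⟩
  refine ⟨e, he, fun x s hs ↦ by_contra fun hxs ↦ ?_⟩
  obtain ⟨p, hp, hpp, hp0, hpm⟩ := exists_idempotent_factorsThroughProjective_of_smul_ne_zero hs hxs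
  refine hmin _ ⟨e - p ∘ₗ e, ?_, rfl⟩ (range_sub_comp_lt hpp hp0 (hpm.trans ?_))
  · convert he.sub (hp.precomp e) using 1
    abel
  · exact Submodule.span_le.mpr (Set.singleton_subset_iff.mpr (LinearMap.mem_range_self e x))

end SelfInjective

theorem mul_sub_mul_mem_of_mul_sub_mul_mem {R : Type*} [Ring R] {I : Submodule Rᵐᵒᵖ R}
    (hI : ∀ a s, s ∈ I → a * s ∈ I) {u v a b : R} (huv : u * v - 1 ∈ I) (hvu : v * u - 1 ∈ I)
    (h : v * b - a * v ∈ I) : b * u - u * a ∈ I := by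
  have hI' : ∀ a s, s ∈ I → s * a ∈ I := fun a s hs ↦ I.smul_mem (op a) hs
  have key : b * u - u * a = u * ((v * b - a * v) * u) - (u * v - 1) * (b * u) +
      u * a * (v * u - 1) := by
    noncomm_ring
  rw [key]
  exact add_mem (sub_mem (hI _ _ (hI' _ _ h)) (hI' _ _ huv)) (hI _ _ hvu)

section TwistedMultiplication

variable {k : Type u} {A : Type v} [Field k] [Ring A] [Algebra k A] (φ : A ≃ₐ[k] A)
  {I : Submodule Aᵐᵒᵖ A} {M N : Type w} [AddCommGroup M] [Module Aᵐᵒᵖ M] [AddCommGroup N]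
  [Module Aᵐᵒᵖ N]

theorem smul_eq_smul_of_sub_mem {x : M} (hx : ∀ s ∈ I, op s • x = 0) {a b : A}
    (hab : a - b ∈ I) : op a • x = op b • x := by
  rw [← sub_eq_zero, ← sub_smul, ← op_sub]
  exact hx _ hab

def twistMul (e : M →ₗ[Aᵐᵒᵖ] M) (he : ∀ x, ∀ s ∈ I, op s • e x = 0) (v : A)
    (hv : ∀ a, a * v - v * φ a ∈ I) : M →ₗ[Aᵐᵒᵖ] Tw φ M where
  toFun x := Tw.of φ (op v • e x)
  map_add' x y := by rw [map_add, smul_add]; rfl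
  map_smul' r x := by
    show op v • e (r • x) = op (φ (unop r)) • op v • e x
    rw [map_smul, ← mul_smul, ← mul_smul]
    exact smul_eq_smul_of_sub_mem (he x) (a := unop r * v) (b := v * φ (unop r)) (hv _)

def untwistMul (e : M →ₗ[Aᵐᵒᵖ] M) (he : ∀ x, ∀ s ∈ I, op s • e x = 0) (u : A)
    (hu : ∀ a, φ a * u - u * a ∈ I) : Tw φ M →ₗ[Aᵐᵒᵖ] M where
  toFun x := op u • e x
  map_add' x y := (congrArg (op u • ·) (e.map_add x y)).trans (smul_add _ _ _)
  map_smul' r x := by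
    show op u • e (op (φ (unop r)) • (show M from x)) = r • op u • e x
    rw [map_smul, ← mul_smul, ← mul_smul]
    exact smul_eq_smul_of_sub_mem (he x) (a := φ (unop r) * u) (b := u * unop r) (hu _)

variable {e : M →ₗ[Aᵐᵒᵖ] M} (he : ∀ x, ∀ s ∈ I, op s • e x = 0) {u v : A}
  (hu : ∀ a, φ a * u - u * a ∈ I) (hv : ∀ a, a * v - v * φ a ∈ I)

theorem untwistMul_comp_twistMul (hvu : v * u - 1 ∈ I) :
    untwistMul φ e he u hu ∘ₗ twistMul φ e he v hv = e ∘ₗ e := by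
  ext x
  show op u • e (op v • e x) = e (e x)
  rw [map_smul, ← mul_smul]
  simpa using smul_eq_smul_of_sub_mem (he (e x)) (a := v * u) (b := 1) hvu

theorem twistMul_comp_untwistMul (huv : u * v - 1 ∈ I) :
    twistMul φ e he v hv ∘ₗ untwistMul φ e he u hu = twMap φ (e ∘ₗ e) := by
  ext x
  show op v • e (op u • e x) = e (e x)
  rw [map_smul, ← mul_smul]
  simpa using smul_eq_smul_of_sub_mem (he (e x)) (a := u * v) (b := 1) huv

theorem twistMul_comp_sub_twMap_comp_twistMul {e' : N →ₗ[Aᵐᵒᵖ] N}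
    (he' : ∀ x, ∀ s ∈ I, op s • e' x = 0) (f : M →ₗ[Aᵐᵒᵖ] N) :
    twistMul φ e' he' v hv ∘ₗ f - twMap φ f ∘ₗ twistMul φ e he v hv =
      twMap φ ((e' - LinearMap.id) ∘ₗ f) ∘ₗ twistMul φ e he v hv -
        twistMul φ e' he' v hv ∘ₗ f ∘ₗ (e - LinearMap.id) := by
  ext x
  show op v • e' (f x) - f (op v • e x) =
    (e' - LinearMap.id : N →ₗ[Aᵐᵒᵖ] N) (f (op v • e x)) -
      op v • e' (f ((e - LinearMap.id : M →ₗ[Aᵐᵒᵖ] M) x))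
  simp only [LinearMap.sub_apply, LinearMap.id_apply, map_sub, map_smul, smul_sub]
  abel

variable {he hu hv}

theorem factorsThroughProjective_twistMul_comp_sub_twMap_comp_twistMul {e' : N →ₗ[Aᵐᵒᵖ] N}
    (he' : ∀ x, ∀ s ∈ I, op s • e' x = 0) (he₁ : FactorsThroughProjective (e - LinearMap.id))
    (he'₁ : FactorsThroughProjective (e' - LinearMap.id)) (f : M →ₗ[Aᵐᵒᵖ] N) :
    FactorsThroughProjective
      (twistMul φ e' he' v hv ∘ₗ f - twMap φ f ∘ₗ twistMul φ e he v hv) := by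
  rw [twistMul_comp_sub_twMap_comp_twistMul]
  exact (((he'₁.precomp f).twMap φ).precomp _).sub (he₁.postcomp (twistMul φ e' he' v hv ∘ₗ f))

theorem factorsThroughProjective_untwistMul_comp_twistMul_sub_id (hvu : v * u - 1 ∈ I)
    (he₁ : FactorsThroughProjective (e - LinearMap.id)) :
    FactorsThroughProjective (untwistMul φ e he u hu ∘ₗ twistMul φ e he v hv - LinearMap.id) := by
  rw [untwistMul_comp_twistMul φ he hu hv hvu]
  exact he₁.comp_self_sub_id

theorem factorsThroughProjective_twistMul_comp_untwistMul_sub_id (huv : u * v - 1 ∈ I)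
    (he₁ : FactorsThroughProjective (e - LinearMap.id)) :
    FactorsThroughProjective (twistMul φ e he v hv ∘ₗ untwistMul φ e he u hu - LinearMap.id) := by
  rw [twistMul_comp_untwistMul φ he hu hv huv]
  exact he₁.comp_self_sub_id.twMap φ

end TwistedMultiplication

/-- Let `A` be a finite-dimensional self-injective algebra and `φ` an
automorphism inducing an inner automorphism of `A/soc(A)`, where `soc(A)` is the sum of
all simple submodules of the right regular module. Then `φ` is stably inner. -/
theorem stablyInner_of_inner_modulo_socle
    {k : Type u} {A : Type v} [Field k] [Ring A] [Algebra k A] [FiniteDimensional k A]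
    (hselfinj : Module.Injective Aᵐᵒᵖ A)
    (φ : A ≃ₐ[k] A)
    (soc : Submodule Aᵐᵒᵖ A)
    (hsoc : soc = sSup {S : Submodule Aᵐᵒᵖ A | IsSimpleModule Aᵐᵒᵖ S})
    (hinner : ∃ u v : A, u * v - 1 ∈ soc ∧ v * u - 1 ∈ soc ∧
      ∀ a : A, v * φ a - a * v ∈ soc) :
    StablyInner φ := by
  obtain ⟨u, v, huv, hvu, hvφ⟩ := hinner
  change soc = socle Aᵐᵒᵖ A at hsoc
  subst hsoc
  have hv (a : A) : a * v - v * φ a ∈ socle Aᵐᵒᵖ A := by simpa using neg_mem (hvφ a)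
  have hu (a : A) : φ a * u - u * a ∈ socle Aᵐᵒᵖ A :=
    mul_sub_mul_mem_of_mul_sub_mul_mem (fun _ _ ↦ mul_mem_socle _) huv hvu (hvφ a)
  have : IsNoetherian Aᵐᵒᵖ A := isNoetherian_of_tower k inferInstance
  have : IsArtinian Aᵐᵒᵖ A := isArtinian_of_tower k inferInstance
  have : IsArtinianRing Aᵐᵒᵖ := .of_finite k Aᵐᵒᵖ
  choose e he₁ he using fun (M : Type v) (_ : AddCommGroup M) (_ : Module Aᵐᵒᵖ M)
      (_ : Module.Finite Aᵐᵒᵖ M) ↦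
    have : IsArtinian Aᵐᵒᵖ M := isArtinian_of_fg_of_artinian'
    exists_factorsThroughProjective_sub_id_smul_eq_zero (A := A) (M := M)
  refine ⟨fun M iM mM fM ↦ twistMul φ (e M iM mM fM) (he M iM mM fM) v hv,
    fun M iM mM fM N iN mN fN f ↦ ?_,
    fun M iM mM fM ↦ ⟨untwistMul φ (e M iM mM fM) (he M iM mM fM) u hu, ?_, ?_⟩⟩
  · exact factorsThroughProjective_twistMul_comp_sub_twMap_comp_twistMul φ _ (he₁ M iM mM fM)
      (he₁ N iN mN fN) f
  · exact factorsThroughProjective_untwistMul_comp_twistMul_sub_id φ hvu (he₁ M iM mM fM)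
  · exact factorsThroughProjective_twistMul_comp_untwistMul_sub_id φ huv (he₁ M iM mM fM)
end

section
/- Let A be a finite-dimensional algebra over a field k and let φ be a k-algebra automorphism of A such that S ≅ S_φ for every simple right A-module S. Then P ≅ P_φ for every finitely generated projective right A-module P. -/
universe u v w

/-! The radical quotient `P ⧸ rad P` is semisimple, so the hypothesis on simple modules gives
`θ : P ⧸ rad P ≅ (P ⧸ rad P)_φ`. By projectivity `θ ∘ π` lifts along the surjection
`π_φ : P_φ → (P ⧸ rad P)_φ`, whose kernel is `rad P_φ`, to some `f : P → P_φ`.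
Since the radical of a finitely generated module is superfluous, `f` is surjective;
since `P` and `P_φ` have the same finite length, it is injective. -/

section RadicalQuotient

variable {R M N Q : Type*} [Ring R] [AddCommGroup M] [Module R M] [AddCommGroup N] [Module R N]
  [AddCommGroup Q] [Module R Q]

theorem Submodule.eq_top_of_sup_jacobson_eq_top [IsCoatomic (Submodule R M)] {p : Submodule R M}
    (h : p ⊔ Module.jacobson R M = ⊤) : p = ⊤ := by
  by_contra hp
  obtain ⟨m, hm, hpm⟩ := (eq_top_or_exists_le_coatom p).resolve_left hp
  have hjm : Module.jacobson R M ≤ m := sInf_le hm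
  exact hm.1 (top_le_iff.mp (h ▸ sup_le hpm hjm))

theorem LinearMap.surjective_of_surjective_comp_of_ker_le_jacobson [IsCoatomic (Submodule R M)]
    {f : N →ₗ[R] M} {g : M →ₗ[R] Q} (hg : LinearMap.ker g ≤ Module.jacobson R M)
    (h : Function.Surjective (g ∘ₗ f)) : Function.Surjective f := by
  have hsup : LinearMap.range f ⊔ LinearMap.ker g = ⊤ := by
    refine eq_top_iff.mpr fun x _ => ?_
    obtain ⟨n, hn⟩ := h (g x)
    have hx : x - f n ∈ LinearMap.ker g := by
      rw [LinearMap.mem_ker, map_sub, ← LinearMap.comp_apply, hn, sub_self]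
    simpa using Submodule.add_mem_sup (LinearMap.mem_range_self f n) hx
  exact LinearMap.range_eq_top.mp
    (Submodule.eq_top_of_sup_jacobson_eq_top (top_le_iff.mp (hsup ▸ sup_le_sup_left hg _)))

theorem LinearMap.injective_of_surjective_of_length_eq {f : M →ₗ[R] N}
    (hf : Function.Surjective f) (h : Module.length R M = Module.length R N)
    (hN : Module.length R N ≠ ⊤) : Function.Injective f := by
  have hadd := Module.length_eq_add_of_exact (LinearMap.ker f).subtype f
    (Submodule.subtype_injective _) hf (LinearMap.exact_subtype_ker_map f)
  rw [h] at hadd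
  have hker : Module.length R (LinearMap.ker f) = 0 :=
    WithTop.add_right_cancel hN (hadd.symm.trans (zero_add _).symm)
  rw [Module.length_eq_zero_iff, Submodule.subsingleton_iff_eq_bot (R := R)] at hker
  exact LinearMap.ker_eq_bot.mp hker

theorem isSemisimpleModule_quotient_jacobson [IsArtinian R M] :
    IsSemisimpleModule R (M ⧸ Module.jacobson R M) :=
  (IsArtinian.isSemisimpleModule_iff_jacobson R _).mpr (Module.jacobson_quotient_jacobson R M)

end RadicalQuotient

namespace Tw

variable {k A : Type*} [Field k] [Ring A] [Algebra k A] (φ : A ≃ₐ[k] A)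
  (M : Type w) [AddCommGroup M] [Module Aᵐᵒᵖ M]

def untwistSemilinear : Tw φ M →ₛₗ[(RingEquiv.op φ.toRingEquiv : Aᵐᵒᵖ →+* Aᵐᵒᵖ)] M where
  toFun x := x
  map_add' _ _ := rfl
  map_smul' _ _ := rfl

def ofSemilinear : M →ₛₗ[((RingEquiv.op φ.toRingEquiv).symm : Aᵐᵒᵖ →+* Aᵐᵒᵖ)] Tw φ M where
  toFun := Tw.of φ
  map_add' _ _ := rfl
  map_smul' r m := congrArg (· • m) ((RingEquiv.op φ.toRingEquiv).apply_symm_apply r).symm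

instance [Module.Finite Aᵐᵒᵖ M] : Module.Finite Aᵐᵒᵖ (Tw φ M) :=
  Module.Finite.of_surjective (ofSemilinear φ M) Function.surjective_id

theorem length_eq : Module.length Aᵐᵒᵖ (Tw φ M) = Module.length Aᵐᵒᵖ M := by
  rw [Module.length, Module.length, WithBot.unbot_inj, Order.krullDim_eq_of_orderIso
    (Submodule.orderIsoMapComapOfBijective (untwistSemilinear φ M) Function.bijective_id)]

theorem ker_twMap_mkQ_jacobson :
    LinearMap.ker (twMap φ (Module.jacobson Aᵐᵒᵖ M).mkQ) = Module.jacobson Aᵐᵒᵖ (Tw φ M) := by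
  rw [← Module.comap_jacobson_of_bijective (f := untwistSemilinear φ M) Function.bijective_id]
  ext x
  exact Submodule.Quotient.mk_eq_zero _

variable {M} in
theorem surjective_twMap {N : Type w} [AddCommGroup N] [Module Aᵐᵒᵖ N] {f : M →ₗ[Aᵐᵒᵖ] N}
    (hf : Function.Surjective f) : Function.Surjective (twMap φ f) :=
  hf

variable {M} in
def congr {N : Type w} [AddCommGroup N] [Module Aᵐᵒᵖ N] (e : M ≃ₗ[Aᵐᵒᵖ] N) :
    Tw φ M ≃ₗ[Aᵐᵒᵖ] Tw φ N :=
  LinearEquiv.ofLinearMap (twMap φ e.toLinearMap) (twMap φ e.symm.toLinearMap)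
    (LinearMap.ext e.apply_symm_apply) (LinearMap.ext e.symm_apply_apply)

def dfinsuppEquiv {ι : Type*} (S : ι → Type*) [∀ i, AddCommGroup (S i)] [∀ i, Module Aᵐᵒᵖ (S i)] :
    Tw φ (Π₀ i, S i) ≃ₗ[Aᵐᵒᵖ] Π₀ i, Tw φ (S i) where
  toFun x := x
  invFun x := x
  map_add' _ _ := rfl
  map_smul' _ _ := rfl
  left_inv _ := rfl
  right_inv _ := rfl

theorem nonempty_linearEquiv_of_isSemisimpleModule [IsSemisimpleModule Aᵐᵒᵖ M]
    (h : ∀ S : Submodule Aᵐᵒᵖ M, IsSimpleModule Aᵐᵒᵖ S → Nonempty (S ≃ₗ[Aᵐᵒᵖ] Tw φ S)) :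
    Nonempty (M ≃ₗ[Aᵐᵒᵖ] Tw φ M) := by
  obtain ⟨s, e, -, hs⟩ := IsSemisimpleModule.exists_linearEquiv_dfinsupp Aᵐᵒᵖ M
  exact ⟨e ≪≫ₗ DFinsupp.mapRange.linearEquiv (fun S => (h S (hs S)).some) ≪≫ₗ
    (dfinsuppEquiv φ _).symm ≪≫ₗ congr φ e.symm⟩

end Tw

/-- If `φ` is an automorphism of a finite-dimensional algebra `A` such that
`S ≅ S_φ` for every simple right `A`-module `S`, then `P ≅ P_φ` for every finitely
generated projective right `A`-module `P`. -/
theorem projective_twist_iso_of_simple_twist_iso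
    {k : Type u} {A : Type v} [Field k] [Ring A] [Algebra k A] [FiniteDimensional k A]
    (φ : A ≃ₐ[k] A)
    (hsimple : ∀ (S : Type v) (iS : AddCommGroup S) (mS : Module Aᵐᵒᵖ S),
      IsSimpleModule Aᵐᵒᵖ S → Nonempty (S ≃ₗ[Aᵐᵒᵖ] Tw φ S))
    (P : Type v) [AddCommGroup P] [Module Aᵐᵒᵖ P] [Module.Finite Aᵐᵒᵖ P]
    (hP : Module.Projective Aᵐᵒᵖ P) :
    Nonempty (P ≃ₗ[Aᵐᵒᵖ] Tw φ P) := by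
  have : IsArtinianRing Aᵐᵒᵖ := .of_finite k Aᵐᵒᵖ
  have := isSemisimpleModule_quotient_jacobson (R := Aᵐᵒᵖ) (M := P)
  obtain ⟨θ⟩ := Tw.nonempty_linearEquiv_of_isSemisimpleModule φ (P ⧸ Module.jacobson Aᵐᵒᵖ P)
    fun S hS => hsimple S _ _ hS
  let π := (Module.jacobson Aᵐᵒᵖ P).mkQ
  obtain ⟨f, hf⟩ := Module.projective_lifting_property (twMap φ π) (θ.toLinearMap ∘ₗ π)
    (Tw.surjective_twMap φ (Submodule.mkQ_surjective _))
  have hsurj : Function.Surjective f :=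
    LinearMap.surjective_of_surjective_comp_of_ker_le_jacobson (Tw.ker_twMap_mkQ_jacobson φ P).le
      (hf ▸ θ.surjective.comp (Submodule.mkQ_surjective _))
  have hinj : Function.Injective f :=
    f.injective_of_surjective_of_length_eq hsurj (Tw.length_eq φ P).symm Module.length_ne_top
  exact ⟨.ofBijective f ⟨hinj, hsurj⟩⟩
end
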